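/- Every tree obtained as a chain graph whose blocks are paths (i.e. formed by concatenation of paths, consecutive paths sharing exactly one end-vertex) is a totally antimagic total graph. -/
import Mathlib


open Sum

/-- The weight of an edge `e` under a total labeling `f` of the graph `G`:
the label of `e` plus the labels of its two endpoints. -/
noncomputable def edgeWt {V : Type*} (G : SimpleGraph V) (f : V ⊕ G.edgeSet → ℕ)
    (e : G.edgeSet) : ℕ :=
  f (inr e) + ∑ᶠ (v : V) (_ : v ∈ (e : Sym2 V)), f (inl v)

/-- The weight of a vertex `v` under a total labeling `f` of the graph `G`:
the label of `v` plus the labels of all edges incident with `v`. -/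
noncomputable def vertexWt {V : Type*} (G : SimpleGraph V) (f : V ⊕ G.edgeSet → ℕ)
    (v : V) : ℕ :=
  f (inl v) + ∑ᶠ (e : G.edgeSet) (_ : v ∈ (e : Sym2 V)), f (inr e)

/-- `f` is a totally antimagic total labeling of `G`: a bijection from `V ∪ E` onto
`{1, …, |V|+|E|}` with pairwise distinct edge-weights and pairwise distinct
vertex-weights. -/
def IsTATLabeling {V : Type*} (G : SimpleGraph V) (f : V ⊕ G.edgeSet → ℕ) : Prop :=
  Set.BijOn f Set.univ (Set.Icc 1 (Nat.card V + Nat.card G.edgeSet)) ∧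
  Function.Injective (edgeWt G f) ∧
  Function.Injective (vertexWt G f)


section Aux
variable {V : Type*} {G : SimpleGraph V}

lemma card_bool' : Nat.card Bool = 2 := by simp [Nat.card_eq_fintype_card]

lemma pathGraph_nbr_le (k : ℕ) (v : Fin k) :
    Nat.card ((SimpleGraph.pathGraph k).neighborSet v) ≤ 2 := by
  have h : Function.Injective (fun u : (SimpleGraph.pathGraph k).neighborSet v =>
      (decide ((u : Fin k).val + 1 = v.val) : Bool)) := by
    rintro ⟨u1, h1⟩ ⟨u2, h2⟩ h
    simp only [SimpleGraph.mem_neighborSet, SimpleGraph.pathGraph_adj] at h1 h2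
    simp only [decide_eq_decide] at h
    have : u1.val = u2.val := by omega
    simp [Subtype.ext_iff, Fin.ext_iff, this]
  have := Nat.card_le_card_of_injective _ h
  rwa [card_bool'] at this

lemma subgraph_nbr_le {V : Type*} {G : SimpleGraph V} (H : G.Subgraph) (k : ℕ)
    (iso : H.coe ≃g SimpleGraph.pathGraph k) (v : V) :
    Nat.card (H.neighborSet v) ≤ 2 := by
  by_cases hv : v ∈ H.verts
  · have e1 := (SimpleGraph.Subgraph.coeNeighborSetEquiv (G' := H) ⟨v, hv⟩).symm
    have e2 := iso.mapNeighborSet ⟨v, hv⟩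
    have := Nat.card_congr (e1.trans e2)
    rw [this]
    exact pathGraph_nbr_le k _
  · have : H.neighborSet v = ∅ := by
      ext w
      simp only [SimpleGraph.Subgraph.mem_neighborSet, Set.mem_empty_iff_false, iff_false]
      exact fun h => hv (H.edge_vert h)
    simp [this]

lemma deg_le_two {V : Type*} [Finite V] (G : SimpleGraph V)
    (m : ℕ) (B : Fin m → G.Subgraph)
    (hcover : (⨆ i, B i) = ⊤)
    (hpath : ∀ i, ∃ k : ℕ, Nonempty ((B i).coe ≃g SimpleGraph.pathGraph k))
    (hend : ∀ (i j : Fin m) (v : V), (i : ℕ) + 1 = (j : ℕ) →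
      v ∈ (B i).verts → v ∈ (B j).verts →
      Nat.card ((B i).neighborSet v) ≤ 1 ∧ Nat.card ((B j).neighborSet v) ≤ 1)
    (hfar : ∀ i j : Fin m, (i : ℕ) + 1 < (j : ℕ) → Disjoint (B i).verts (B j).verts)
    (v : V) : Nat.card (G.neighborSet v) ≤ 2 := by
  classical
  have hblk : ∀ w, G.Adj v w → ∃ i, (B i).Adj v w := by
    intro w hw
    have : (⨆ i, B i).Adj v w := by rw [hcover]; exact hw
    exact SimpleGraph.Subgraph.iSup_adj.mp this
  have hS2 : ∀ i j : Fin m, v ∈ (B i).verts → v ∈ (B j).verts → i ≠ j →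
      (i : ℕ) + 1 = (j : ℕ) ∨ (j : ℕ) + 1 = (i : ℕ) := by
    intro i j hi hj hij
    by_contra hc
    push_neg at hc
    have hne : (i : ℕ) ≠ (j : ℕ) := fun h => hij (Fin.ext h)
    rcases lt_or_gt_of_ne hne with h | h
    · have : (i : ℕ) + 1 < (j : ℕ) := by omega
      exact (hfar i j this).ne_of_mem hi hj rfl
    · have : (j : ℕ) + 1 < (i : ℕ) := by omega
      exact (hfar j i this).ne_of_mem hj hi rfl
  by_cases hex : ∃ i : Fin m, v ∈ (B i).verts
  · obtain ⟨i, hi⟩ := hex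
    by_cases hex2 : ∃ j : Fin m, v ∈ (B j).verts ∧ j ≠ i
    · obtain ⟨j, hj, hji⟩ := hex2
      -- two consecutive blocks
      have hcons := hS2 i j hi hj (Ne.symm hji)
      have hsub : G.neighborSet v ⊆ (B i).neighborSet v ∪ (B j).neighborSet v := by
        intro w hw
        obtain ⟨k, hk⟩ := hblk w hw
        have hkS : v ∈ (B k).verts := (B k).edge_vert hk
        by_cases hki : k = i
        · left; rw [← hki]; exact hk
        · by_cases hkj : k = j
          · right; rw [← hkj]; exact hk
          · exfalso
            have h1 := hS2 k i hkS hi hki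
            have h2 := hS2 k j hkS hj hkj
            have h3 : (i : ℕ) ≠ (j : ℕ) := fun h => hji (Fin.ext h.symm)
            omega
      have hb1 : ((B i).neighborSet v).ncard ≤ 1 ∧ ((B j).neighborSet v).ncard ≤ 1 := by
        rcases hcons with h | h
        · have := hend i j v h hi hj
          rwa [Nat.card_coe_set_eq, Nat.card_coe_set_eq] at this
        · have := hend j i v h hj hi
          rw [Nat.card_coe_set_eq, Nat.card_coe_set_eq] at this
          exact this.symm
      calc Nat.card (G.neighborSet v) = (G.neighborSet v).ncard := Nat.card_coe_set_eq _
        _ ≤ ((B i).neighborSet v ∪ (B j).neighborSet v).ncard :=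
            Set.ncard_le_ncard hsub (Set.toFinite _)
        _ ≤ ((B i).neighborSet v).ncard + ((B j).neighborSet v).ncard := Set.ncard_union_le _ _
        _ ≤ 2 := by omega
    · push_neg at hex2
      have hsub : G.neighborSet v ⊆ (B i).neighborSet v := by
        intro w hw
        obtain ⟨k, hk⟩ := hblk w hw
        have : k = i := hex2 k ((B k).edge_vert hk)
        rw [← this]; exact hk
      obtain ⟨k, ⟨iso⟩⟩ := hpath i
      have h2 := subgraph_nbr_le (B i) k iso v
      rw [Nat.card_coe_set_eq] at h2 ⊢
      exact le_trans (Set.ncard_le_ncard hsub (Set.toFinite _)) h2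
  · push_neg at hex
    have : G.neighborSet v = ∅ := by
      ext w
      simp only [SimpleGraph.mem_neighborSet, Set.mem_empty_iff_false, iff_false]
      intro hw
      obtain ⟨k, hk⟩ := hblk w hw
      exact hex k ((B k).edge_vert hk)
    simp [this]


lemma walk_concat_decomp {u v : V} (p : G.Walk u v) (h : 0 < p.length) :
    ∃ (x : V) (q : G.Walk u x) (ha : G.Adj x v), p = q.concat ha := by
  cases p with
  | nil => simp at h
  | cons ha q => exact SimpleGraph.Walk.exists_cons_eq_concat ha q

lemma exists_adj_dist (hconn : G.Connected) {u v : V} {d : ℕ} (h : G.dist u v = d + 1) :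
    ∃ x, G.Adj x v ∧ G.dist u x = d := by
  obtain ⟨p, hp⟩ := (hconn u v).exists_walk_length_eq_dist
  rw [h] at hp
  obtain ⟨x, q, ha, rfl⟩ := walk_concat_decomp p (by omega)
  rw [SimpleGraph.Walk.length_concat] at hp
  refine ⟨x, ha, le_antisymm ?_ ?_⟩
  · exact le_trans (SimpleGraph.dist_le q) (by omega)
  · have ht := hconn.dist_triangle (u := u) (v := x) (w := v)
    have h1 : G.dist x v = 1 := SimpleGraph.dist_eq_one_iff_adj.mpr ha
    omega

lemma two_mem_card [Finite V] {s : Set V} (a b : V) (ha : a ∈ s) (hb : b ∈ s) (hab : a ≠ b) :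
    2 ≤ Nat.card s := by
  rw [Nat.card_coe_set_eq]
  have : 1 < s.ncard := (Set.one_lt_ncard_iff (Set.toFinite s)).mpr ⟨a, b, ha, hb, hab⟩
  omega

lemma three_mem_card [Finite V] {s : Set V} (a b c : V) (ha : a ∈ s) (hb : b ∈ s) (hc : c ∈ s)
    (hab : a ≠ b) (hac : a ≠ c) (hbc : b ≠ c) : 3 ≤ Nat.card s := by
  rw [Nat.card_coe_set_eq]
  have : 2 < s.ncard := (Set.two_lt_ncard_iff (Set.toFinite s)).mpr ⟨a, b, c, ha, hb, hc, hab, hac, hbc⟩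
  omega

lemma level_unique [Finite V] (hconn : G.Connected) {u : V}
    (hu : Nat.card (G.neighborSet u) ≤ 1)
    (hdeg : ∀ v, Nat.card (G.neighborSet v) ≤ 2) :
    ∀ d v w, G.dist u v = d → G.dist u w = d → v = w := by
  intro d
  induction d using Nat.strong_induction_on with
  | _ d IH =>
    intro v w hv hw
    match d, hv, hw with
    | 0, hv, hw =>
      have h1 : v = u := (((hconn u v).dist_eq_zero_iff).mp hv).symm
      have h2 : w = u := (((hconn u w).dist_eq_zero_iff).mp hw).symm
      rw [h1, h2]
    | (d + 1), hv, hw =>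
      by_contra hvw
      obtain ⟨x, hxv, hxd⟩ := exists_adj_dist hconn hv
      obtain ⟨y, hyw, hyd⟩ := exists_adj_dist hconn hw
      have hxy : x = y := IH d (by omega) x y hxd hyd
      subst hxy
      have hvmem : v ∈ G.neighborSet x := hxv
      have hwmem : w ∈ G.neighborSet x := hyw
      match d, hxd with
      | 0, hxd =>
        have hx : x = u := (((hconn u x).dist_eq_zero_iff).mp hxd).symm
        subst hx
        have := two_mem_card v w hvmem hwmem hvw
        omega
      | (d' + 1), hxd =>
        obtain ⟨z, hzx, hzd⟩ := exists_adj_dist hconn hxd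
        have hzmem : z ∈ G.neighborSet x := hzx.symm
        have hzv : z ≠ v := by
          intro h; rw [h] at hzd; omega
        have hzw : z ≠ w := by
          intro h; rw [h] at hzd; omega
        have := three_mem_card z v w hzmem hvmem hwmem hzv hzw hvw
        have := hdeg x
        omega

lemma levels_nonempty (hconn : G.Connected) {u : V} :
    ∀ (k : ℕ) (v : V), G.dist u v = k → ∀ j ≤ k, ∃ x, G.dist u x = j := by
  intro k
  induction k with
  | zero =>
    intro v _ j hj
    have hj0 : j = 0 := Nat.le_zero.mp hj
    subst hj0
    exact ⟨u, by simp⟩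
  | succ k IH =>
    intro v hv j hj
    rcases Nat.lt_or_ge j (k + 1) with h | h
    · obtain ⟨x, _, hxd⟩ := exists_adj_dist hconn hv
      exact IH x hxd j (by omega)
    · exact ⟨v, by omega⟩

lemma dist_lt_card [Finite V] (hconn : G.Connected) {u : V}
    (hu : Nat.card (G.neighborSet u) ≤ 1)
    (hdeg : ∀ v, Nat.card (G.neighborSet v) ≤ 2) (v : V) :
    G.dist u v < Nat.card V := by
  classical
  set d := G.dist u v with hd
  have hlev := levels_nonempty hconn d v hd.symm
  choose g hg using hlev
  have hinj : Function.Injective (fun j : Fin (d + 1) => g j.val (by omega)) := by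
    intro a b hab
    have ha := hg a.val (by omega)
    have hb := hg b.val (by omega)
    simp only at hab
    rw [hab] at ha
    ext
    omega
  have := Nat.card_le_card_of_injective _ hinj
  simp only [Nat.card_eq_fintype_card, Fintype.card_fin] at this
  omega

lemma exists_low_deg [Finite V] (htree : G.IsTree) :
    ∃ u : V, Nat.card (G.neighborSet u) ≤ 1 := by
  classical
  by_contra hc
  push_neg at hc
  have := Fintype.ofFinite V
  have hdec : DecidableRel G.Adj := Classical.decRel _
  have hcard := htree.card_edgeFinset
  have hsum := G.sum_degrees_eq_twice_card_edges
  have hge : ∀ v : V, 2 ≤ G.degree v := by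
    intro v
    have := hc v
    rwa [Nat.card_coe_set_eq, Set.ncard_eq_toFinset_card', Set.toFinset_card,
      SimpleGraph.card_neighborSet_eq_degree] at this
  have h2 : 2 * Fintype.card V ≤ ∑ v : V, G.degree v := by
    calc 2 * Fintype.card V = ∑ _v : V, 2 := by simp [Finset.sum_const, mul_comm]
      _ ≤ ∑ v : V, G.degree v := Finset.sum_le_sum (fun i _ => hge i)
  rw [hsum] at h2
  have hpos : 1 ≤ Fintype.card V := by
    have : Nonempty V := htree.isConnected.nonempty
    exact Fintype.card_pos
  omega

lemma exists_path_equiv [Finite V] (htree : G.IsTree)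
    (hdeg : ∀ v, Nat.card (G.neighborSet v) ≤ 2) :
    ∃ ψ : Fin (Nat.card V) ≃ V, ∀ i j : Fin (Nat.card V),
      G.Adj (ψ i) (ψ j) ↔ (i : ℕ) + 1 = (j : ℕ) ∨ (j : ℕ) + 1 = (i : ℕ) := by
  classical
  have := Fintype.ofFinite V
  obtain ⟨u, hu⟩ := exists_low_deg htree
  have hconn := htree.isConnected
  have hlu := level_unique hconn hu hdeg
  set n := Nat.card V with hn
  have hlt : ∀ v, G.dist u v < n := fun v => dist_lt_card hconn hu hdeg v
  set ρ : V → Fin n := fun v => ⟨G.dist u v, hlt v⟩ with hρ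
  have hinj : Function.Injective ρ := by
    intro a b hab
    exact hlu (G.dist u a) a b rfl (by rw [Fin.ext_iff] at hab; exact hab.symm)
  have hbij : Function.Bijective ρ := by
    refine (Fintype.bijective_iff_injective_and_card ρ).mpr ⟨hinj, ?_⟩
    simp [hn, Nat.card_eq_fintype_card]
  refine ⟨(Equiv.ofBijective ρ hbij).symm, ?_⟩
  have key : ∀ v w : V, G.Adj v w ↔
      G.dist u v + 1 = G.dist u w ∨ G.dist u w + 1 = G.dist u v := by
    intro v w
    constructor
    · intro h
      have h1 : G.dist v w = 1 := SimpleGraph.dist_eq_one_iff_adj.mpr h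
      have h2 : G.dist w v = 1 := SimpleGraph.dist_eq_one_iff_adj.mpr h.symm
      have t1 := hconn.dist_triangle (u := u) (v := v) (w := w)
      have t2 := hconn.dist_triangle (u := u) (v := w) (w := v)
      have hne : G.dist u v ≠ G.dist u w := by
        intro hh
        exact h.ne (hlu _ v w rfl hh.symm)
      omega
    · rintro (h | h)
      · obtain ⟨x, hx, hxd⟩ := exists_adj_dist hconn (d := G.dist u v) (v := w) h.symm
        have : x = v := hlu _ x v hxd rfl
        rw [← this]; exact hx
      · obtain ⟨x, hx, hxd⟩ := exists_adj_dist hconn (d := G.dist u w) (v := v) h.symm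
        have : x = w := hlu _ x w hxd rfl
        rw [← this]
        exact hx.symm
  intro i j
  rw [key]
  have hi : ρ ((Equiv.ofBijective ρ hbij).symm i) = i := (Equiv.ofBijective ρ hbij).apply_symm_apply i
  have hj : ρ ((Equiv.ofBijective ρ hbij).symm j) = j := (Equiv.ofBijective ρ hbij).apply_symm_apply j
  have hi' : G.dist u ((Equiv.ofBijective ρ hbij).symm i) = (i : ℕ) := congrArg Fin.val hi
  have hj' : G.dist u ((Equiv.ofBijective ρ hbij).symm j) = (j : ℕ) := congrArg Fin.val hj
  rw [hi', hj']

lemma pair_finsum {V : Type*} (g : V → ℕ) (a b : V) (hab : a ≠ b) :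
    ∑ᶠ (v : V) (_ : v ∈ (s(a,b) : Sym2 V)), g v = g a + g b := by
  have hset : {v : V | v ∈ (s(a,b) : Sym2 V)} = {a, b} := by
    ext x; simp [Sym2.mem_iff]
  have : ∑ᶠ (v : V) (_ : v ∈ (s(a,b) : Sym2 V)), g v
      = ∑ᶠ v ∈ {v : V | v ∈ (s(a,b) : Sym2 V)}, g v := rfl
  rw [this, hset, finsum_mem_pair hab]

lemma path_TAT {V : Type*} [Finite V] (G : SimpleGraph V) (n : ℕ)
    (hn : n = Nat.card V) (hn1 : 1 ≤ n) (ψ : Fin n ≃ V)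
    (hadj : ∀ i j : Fin n, G.Adj (ψ i) (ψ j) ↔ (i : ℕ) + 1 = (j : ℕ) ∨ (j : ℕ) + 1 = (i : ℕ)) :
    ∃ f : V ⊕ G.edgeSet → ℕ, IsTATLabeling G f := by
  classical
  set ρ : V → ℕ := fun v => ((ψ.symm v : Fin n) : ℕ) with hρ
  have hρψ : ∀ i : Fin n, ρ (ψ i) = (i : ℕ) := by intro i; simp [hρ]
  have hρlt : ∀ v, ρ v < n := fun v => (ψ.symm v).isLt
  have hρinj : Function.Injective ρ := by
    intro a b hab
    have : ψ.symm a = ψ.symm b := Fin.ext hab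
    exact ψ.symm.injective this
  have hρsurj : ∀ i : ℕ, i < n → ∃ v, ρ v = i := by
    intro i hi
    exact ⟨ψ ⟨i, hi⟩, by rw [hρψ]⟩
  have hA : ∀ v w : V, G.Adj v w ↔ ρ v + 1 = ρ w ∨ ρ w + 1 = ρ v := by
    intro v w
    have := hadj (ψ.symm v) (ψ.symm w)
    simpa [hρ] using this
  -- the minimum-endpoint index of an edge
  set μ : G.edgeSet → ℕ :=
    fun e => Sym2.lift ⟨fun a b => min (ρ a) (ρ b), fun a b => min_comm _ _⟩ (e : Sym2 V) with hμ
  have hdecomp : ∀ e : G.edgeSet, ∃ a b : V, (e : Sym2 V) = s(a,b) ∧ G.Adj a b ∧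
      ρ b = ρ a + 1 ∧ μ e = ρ a := by
    rintro ⟨s, hs⟩
    induction s using Sym2.ind with
    | _ x y =>
      rw [SimpleGraph.mem_edgeSet] at hs
      rcases (hA x y).mp hs with h | h
      · exact ⟨x, y, rfl, hs, h.symm, by simp [hμ]; omega⟩
      · exact ⟨y, x, Sym2.eq_swap, hs.symm, h.symm, by simp [hμ]; omega⟩
  have hμlt : ∀ e : G.edgeSet, μ e + 1 < n := by
    intro e
    obtain ⟨a, b, _, _, hba, hμa⟩ := hdecomp e
    have := hρlt b
    omega
  have hμinj : Function.Injective μ := by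
    intro e1 e2 h
    obtain ⟨a1, b1, he1, _, hb1, hm1⟩ := hdecomp e1
    obtain ⟨a2, b2, he2, _, hb2, hm2⟩ := hdecomp e2
    have ha : a1 = a2 := hρinj (by omega)
    have hb : b1 = b2 := hρinj (by omega)
    apply Subtype.ext
    rw [he1, he2, ha, hb]
  set E : (i : ℕ) → i + 1 < n → G.edgeSet := fun i h =>
    ⟨s(ψ ⟨i, by omega⟩, ψ ⟨i+1, h⟩), by
      rw [SimpleGraph.mem_edgeSet]
      exact (hadj _ _).mpr (Or.inl rfl)⟩ with hE
  have hμE : ∀ (i : ℕ) (h : i + 1 < n), μ (E i h) = i := by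
    intro i h
    simp [hμ, hE, hρψ]
  have hcardE : Nat.card G.edgeSet = n - 1 := by
    have hbij : Function.Bijective (fun e : G.edgeSet => (⟨μ e, by have := hμlt e; omega⟩ : Fin (n-1))) := by
      constructor
      · intro e1 e2 h
        apply hμinj
        simpa [Fin.ext_iff] using h
      · rintro ⟨i, hi⟩
        have hi' : i + 1 < n := by omega
        exact ⟨E i hi', by simp [Fin.ext_iff, hμE]⟩
    have := Nat.card_eq_of_bijective _ hbij
    simpa using this
  -- the labeling
  set f : V ⊕ G.edgeSet → ℕ := Sum.elim (fun v => ρ v + 1) (fun e => 2*n - 1 - μ e) with hf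
  have hfinj : Function.Injective f := by
    rintro (v | e) (w | e') h
    · simp only [hf, Sum.elim_inl] at h
      exact congrArg inl (hρinj (by omega))
    · simp only [hf, Sum.elim_inl, Sum.elim_inr] at h
      have := hρlt v; have := hμlt e'
      omega
    · simp only [hf, Sum.elim_inl, Sum.elim_inr] at h
      have := hρlt w; have := hμlt e
      omega
    · simp only [hf, Sum.elim_inr] at h
      have h1 := hμlt e; have h2 := hμlt e'
      exact congrArg inr (hμinj (by omega))
  have htot : Nat.card V + Nat.card G.edgeSet = 2*n - 1 := by
    rw [← hn, hcardE]; omega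
  refine ⟨f, ?_, ?_, ?_⟩
  · -- bijection
    rw [htot]
    refine ⟨?_, fun a _ b _ h => hfinj h, ?_⟩
    · rintro (v | e) -
      · have := hρlt v
        simp only [hf, Sum.elim_inl, Set.mem_Icc]
        omega
      · have := hμlt e
        simp only [hf, Sum.elim_inr, Set.mem_Icc]
        omega
    · intro t ht
      simp only [Set.mem_Icc] at ht
      by_cases hc : t ≤ n
      · obtain ⟨v, hv⟩ := hρsurj (t - 1) (by omega)
        exact ⟨inl v, Set.mem_univ _, by simp [hf, hv]; omega⟩
      · have hi : (2*n - 1 - t) + 1 < n := by omega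
        refine ⟨inr (E _ hi), Set.mem_univ _, ?_⟩
        simp [hf, hμE]
        omega
  · -- edge weights
    have hwt : ∀ e : G.edgeSet, edgeWt G f e = 2*n + μ e + 2 := by
      intro e
      obtain ⟨a, b, hee, hab, hba, hμa⟩ := hdecomp e
      rw [edgeWt, hee, pair_finsum _ _ _ hab.ne]
      simp only [hf, Sum.elim_inl, Sum.elim_inr]
      have := hμlt e
      omega
    intro e1 e2 h
    rw [hwt, hwt] at h
    exact hμinj (by omega)
  · -- vertex weights
    have hmem : ∀ (v : V) (e : G.edgeSet),
        v ∈ (e : Sym2 V) ↔ (μ e = ρ v ∨ μ e + 1 = ρ v) := by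
      intro v e
      obtain ⟨a, b, hee, hab, hba, hμa⟩ := hdecomp e
      rw [hee, Sym2.mem_iff]
      constructor
      · rintro (rfl | rfl)
        · left; omega
        · right; omega
      · rintro (h | h)
        · left; exact (hρinj (by omega)).symm
        · right; exact (hρinj (by omega)).symm
    have hIdef : ∀ v : V, {e : G.edgeSet | v ∈ (e : Sym2 V)}
        = {e : G.edgeSet | μ e = ρ v ∨ μ e + 1 = ρ v} := by
      intro v; ext e; exact hmem v e
    set W : ℕ → ℕ := fun j =>
      if n = 1 then 1 else if j = 0 then 2*n else if j = n - 1 then 2*n + 1 else 4*n - j with hW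
    have hvwt : ∀ v : V, vertexWt G f v = W (ρ v) := by
      intro v
      have hjlt := hρlt v
      have heq : vertexWt G f v
          = f (inl v) + ∑ᶠ e ∈ {e : G.edgeSet | v ∈ (e : Sym2 V)}, f (inr e) := rfl
      by_cases h1 : n = 1
      · have hempty : {e : G.edgeSet | v ∈ (e : Sym2 V)} = ∅ := by
          ext e
          have := hμlt e
          simp only [Set.mem_empty_iff_false, iff_false, Set.mem_setOf_eq]
          intro _
          omega
        rw [heq, hempty, finsum_mem_empty]
        simp only [hf, Sum.elim_inl, hW]
        split_ifs <;> omega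
      · have h2 : 2 ≤ n := by omega
        by_cases hz : ρ v = 0
        · have h0 : (0:ℕ) + 1 < n := by omega
          have hsing : {e : G.edgeSet | v ∈ (e : Sym2 V)} = {E 0 h0} := by
            rw [hIdef]
            ext e
            simp only [Set.mem_setOf_eq, Set.mem_singleton_iff, hz]
            constructor
            · rintro (h | h)
              · exact hμinj (by rw [hμE]; omega)
              · omega
            · rintro rfl
              left; rw [hμE]
          rw [heq, hsing, finsum_mem_singleton]
          simp only [hf, Sum.elim_inl, Sum.elim_inr, hW, hμE]
          split_ifs <;> omega
        · by_cases hl : ρ v = n - 1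
          · have h0 : (n - 2) + 1 < n := by omega
            have hsing : {e : G.edgeSet | v ∈ (e : Sym2 V)} = {E (n-2) h0} := by
              rw [hIdef]
              ext e
              simp only [Set.mem_setOf_eq, Set.mem_singleton_iff, hl]
              constructor
              · rintro (h | h)
                · have := hμlt e; omega
                · exact hμinj (by rw [hμE]; omega)
              · rintro rfl
                right; rw [hμE]; omega
            rw [heq, hsing, finsum_mem_singleton]
            simp only [hf, Sum.elim_inl, Sum.elim_inr, hW, hμE]
            split_ifs <;> omega
          · -- interior
            have hj1 : ρ v - 1 + 1 < n := by omega
            have hj2 : ρ v + 1 < n := by omega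
            have hpair : {e : G.edgeSet | v ∈ (e : Sym2 V)} = {E (ρ v) hj2, E (ρ v - 1) hj1} := by
              rw [hIdef]
              ext e
              simp only [Set.mem_setOf_eq, Set.mem_insert_iff, Set.mem_singleton_iff]
              constructor
              · rintro (h | h)
                · left; exact hμinj (by rw [hμE]; omega)
                · right; exact hμinj (by rw [hμE]; omega)
              · rintro (rfl | rfl)
                · left; rw [hμE]
                · right; rw [hμE]; omega
            have hEne : E (ρ v) hj2 ≠ E (ρ v - 1) hj1 := by
              intro h
              have := congrArg μ h
              rw [hμE, hμE] at this
              omega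
            rw [heq, hpair, finsum_mem_pair hEne]
            simp only [hf, Sum.elim_inl, Sum.elim_inr, hW, hμE]
            split_ifs <;> omega
    intro v w h
    rw [hvwt, hvwt] at h
    have hv := hρlt v; have hw := hρlt w
    apply hρinj
    simp only [hW] at h
    split_ifs at h <;> omega

end Aux

/-- Every tree obtained as a chain graph whose blocks are paths (consecutive paths
sharing exactly one vertex, which is an end-vertex of each of the two paths, and
non-consecutive paths being disjoint) is a totally antimagic total graph. -/
theorem tree_chain_of_paths_is_TAT {V : Type*} [Finite V] (G : SimpleGraph V)
    (htree : G.IsTree)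
    (m : ℕ) (hm : 1 ≤ m) (B : Fin m → G.Subgraph)
    (hcover : (⨆ i, B i) = ⊤)
    (hpath : ∀ i, ∃ k : ℕ, Nonempty ((B i).coe ≃g SimpleGraph.pathGraph k))
    (hconsec : ∀ i j : Fin m, (i : ℕ) + 1 = (j : ℕ) →
      ∃! v : V, v ∈ (B i).verts ∧ v ∈ (B j).verts)
    (hend : ∀ (i j : Fin m) (v : V), (i : ℕ) + 1 = (j : ℕ) →
      v ∈ (B i).verts → v ∈ (B j).verts →
      Nat.card ((B i).neighborSet v) ≤ 1 ∧ Nat.card ((B j).neighborSet v) ≤ 1)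
    (hfar : ∀ i j : Fin m, (i : ℕ) + 1 < (j : ℕ) → Disjoint (B i).verts (B j).verts) :
    ∃ f : V ⊕ G.edgeSet → ℕ, IsTATLabeling G f := by
  have hdeg : ∀ v, Nat.card (G.neighborSet v) ≤ 2 :=
    deg_le_two G m B hcover hpath hend hfar
  obtain ⟨ψ, hψ⟩ := exists_path_equiv htree hdeg
  have hne : Nonempty V := htree.isConnected.nonempty
  have hn1 : 1 ≤ Nat.card V := Nat.card_pos
  exact path_TAT G (Nat.card V) rfl hn1 ψ hψ
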